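/- arXiv:2604.06570 — 5 statements merged into one kernel-verified Lean document; each statement's English description precedes it below -/
import Mathlib

section
/- Let F_L, F_R : ℝⁿ → ℝⁿ be C¹ and H : ℝⁿ → ℝ be C², and write L_F H(X) = ∇H(X)·F(X). Suppose L_{F_R}H(0) = 0 and L_{F_L}H(0) ≠ 0. Then the sliding vector field F_S(X) = (F_R(X) L_{F_L}H(X) − F_L(X) L_{F_R}H(X))/(L_{F_L}H(X) − L_{F_R}H(X)) is well-defined on a neighbourhood of 0, satisfies F_S(0) = F_R(0), is differentiable at 0, and its derivative at 0 is the linear map v ↦ DF_R(0)v + ((∇(L_{F_R}H)(0)·v)/L_{F_L}H(0)) (F_R(0) − F_L(0)). -/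
/-!
Near the fold point, where `L_{F_L}H - L_{F_R}H ≠ 0`, the sliding field can be rewritten as
`F_S = F_R + L_{F_R}H • W` with `W = (L_{F_L}H - L_{F_R}H)⁻¹ • (F_R - F_L)`. Since `L_{F_R}H`
vanishes at the fold point, the product rule for `L_{F_R}H • W` there needs only the continuity
of `W`, and `W 0` is the vector `(L_{F_L}H 0)⁻¹ • (F_R 0 - F_L 0)` appearing in the derivative.
-/

open Asymptotics Topology

section Algebra

variable {𝕜 E F : Type*} [Field 𝕜] [AddCommGroup F] [Module 𝕜 F]

/-- `LL` and `LR` stand for the Lie derivatives `L_{F_L}H` and `L_{F_R}H`. -/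
def slidingField (LL LR : E → 𝕜) (FL FR : E → F) (y : E) : F :=
  (LL y - LR y)⁻¹ • (LL y • FR y - LR y • FL y)

theorem slidingField_eq_add_smul {LL LR : E → 𝕜} {FL FR : E → F} {y : E}
    (hy : LL y - LR y ≠ 0) :
    slidingField LL LR FL FR y = FR y + LR y • ((LL y - LR y)⁻¹ • (FR y - FL y)) := by
  rw [slidingField, inv_smul_eq_iff₀ hy, smul_add, smul_comm (LL y - LR y) (LR y),
    smul_inv_smul₀ hy]
  module

theorem slidingField_of_eq_zero {LL LR : E → 𝕜} {FL FR : E → F} {y : E}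
    (h0 : LR y = 0) (hne : LL y ≠ 0) : slidingField LL LR FL FR y = FR y := by
  simp [slidingField, h0, smul_smul, hne]

end Algebra

section Normed

variable {𝕜 E F : Type*} [NontriviallyNormedField 𝕜] [NormedAddCommGroup E] [NormedSpace 𝕜 E]
  [NormedAddCommGroup F] [NormedSpace 𝕜 F]

theorem HasFDerivAt.smul_of_continuousAt_of_eq_zero {b : E → 𝕜} {c : E → F} {b' : E →L[𝕜] 𝕜}
    {x : E} (hb : HasFDerivAt b b' x) (hbx : b x = 0) (hc : ContinuousAt c x) :
    HasFDerivAt (fun y => b y • c y) (b'.smulRight (c x)) x := by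
  have hc' : (fun y => c y - c x) =o[𝓝 x] fun _ => (1 : ℝ) :=
    (isLittleO_one_iff ℝ).2 (by simpa using hc.sub_const (c x))
  have hbO : b =O[𝓝 x] fun y => ‖y - x‖ := by
    simpa [hbx] using hb.isBigO_sub.norm_right
  have hsmul : HasFDerivAt (fun y => b y • (c y - c x)) (0 : E →L[𝕜] F) x :=
    .of_isLittleO (by simpa [hbx] using (hbO.smul_isLittleO hc').norm_right)
  convert (hb.smul_const (c x)).add hsmul using 1
  · ext y
    simp [smul_sub]
  · simp

theorem hasFDerivAt_slidingField_of_eq_zero {LL LR : E → 𝕜} {FL FR : E → F} {x : E}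
    {LR' : E →L[𝕜] 𝕜} {FR' : E →L[𝕜] F} (hLL : ContinuousAt LL x) (hLR : HasFDerivAt LR LR' x)
    (hFL : ContinuousAt FL x) (hFR : HasFDerivAt FR FR' x) (h0 : LR x = 0) (hne : LL x ≠ 0) :
    HasFDerivAt (slidingField LL LR FL FR)
      (FR' + LR'.smulRight ((LL x)⁻¹ • (FR x - FL x))) x := by
  have hden : LL x - LR x ≠ 0 := by rwa [h0, sub_zero]
  have hW : ContinuousAt (fun y => (LL y - LR y)⁻¹ • (FR y - FL y)) x :=
    ((hLL.sub hLR.continuousAt).inv₀ hden).smul (hFR.continuousAt.sub hFL)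
  have hderiv := hFR.add (hLR.smul_of_continuousAt_of_eq_zero h0 hW)
  rw [h0, sub_zero] at hderiv
  refine hderiv.congr_of_eventuallyEq ?_
  filter_upwards [(hLL.sub hLR.continuousAt).eventually_ne hden] with y hy
  exact slidingField_eq_add_smul hy

end Normed

/-- Near a fold point of `F_R` on the switching surface, the Filippov sliding vector
field is well-defined, agrees with `F_R` at the fold point, and is differentiable
there with the stated derivative. -/
theorem stmt_1 (n : ℕ) (FL FR : (Fin n → ℝ) → (Fin n → ℝ)) (H : (Fin n → ℝ) → ℝ)
    (hFL : ContDiff ℝ 1 FL) (hFR : ContDiff ℝ 1 FR) (hH : ContDiff ℝ 2 H)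
    (LL LR : (Fin n → ℝ) → ℝ)
    (hLL : LL = fun X => fderiv ℝ H X (FL X))
    (hLR : LR = fun X => fderiv ℝ H X (FR X))
    (h0 : LR 0 = 0) (hne : LL 0 ≠ 0)
    (FS : (Fin n → ℝ) → (Fin n → ℝ))
    (hFS : FS = fun X => (LL X - LR X)⁻¹ • (LL X • FR X - LR X • FL X)) :
    (∀ᶠ X in nhds (0 : Fin n → ℝ), LL X - LR X ≠ 0) ∧
    FS 0 = FR 0 ∧
    HasFDerivAt FS
      (fderiv ℝ FR 0 + (fderiv ℝ LR 0).smulRight ((LL 0)⁻¹ • (FR 0 - FL 0))) 0 := by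
  subst hFS
  have hdH : ContDiff ℝ 1 (fderiv ℝ H) := hH.fderiv_right (by norm_num)
  have hLLc : ContDiff ℝ 1 LL := hLL ▸ hdH.clm_apply hFL
  have hLRc : ContDiff ℝ 1 LR := hLR ▸ hdH.clm_apply hFR
  have hden : LL 0 - LR 0 ≠ 0 := by rwa [h0, sub_zero]
  refine ⟨(hLLc.continuous.sub hLRc.continuous).continuousAt.eventually_ne hden,
    slidingField_of_eq_zero h0 hne, ?_⟩
  exact hasFDerivAt_slidingField_of_eq_zero hLLc.continuous.continuousAt
    (hLRc.differentiable one_ne_zero 0).hasFDerivAt hFL.continuous.continuousAt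
    (hFR.differentiable one_ne_zero 0).hasFDerivAt h0 hne
end

section
/- Let β, γ ∈ ℝ with β ≠ 0, let M be a 3×3 real matrix, and let T be an invertible 3×3 real matrix with T⁻¹ M T = J(β,γ). Let w, v ∈ ℝ³ satisfy wᵀM = γ wᵀ, M v = γ v, and wᵀv = 1. Then the outer product v wᵀ equals T E₃₃ T⁻¹, where E₃₃ is the 3×3 matrix whose only nonzero entry is a 1 in position (3,3). -/
/-!
Conjugating by `T` turns `v` and `w` into eigenvectors `T⁻¹ v` and `wᵀ T` of `J(β,γ)` for `γ`.
Since `β ≠ 0`, the rotation block `!![0, β; -β, 0]` has no real eigenvalue, so both are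
multiples of the third basis vector `e₃`; the normalisation `wᵀ v = 1` fixes the product of
the two multiples to `1`, whence `T⁻¹ (v wᵀ) T = e₃ e₃ᵀ = E₃₃`.
-/

open Matrix

namespace Matrix

section Conjugation

variable {n K : Type*} [Fintype n] [DecidableEq n] [CommRing K]
  {M T J : Matrix n n K} {γ : K}

theorem mulVec_inv_eigenvector_of_conj (hT : IsUnit T.det) (hconj : T⁻¹ * M * T = J)
    {v : n → K} (hv : M *ᵥ v = γ • v) : J *ᵥ (T⁻¹ *ᵥ v) = γ • (T⁻¹ *ᵥ v) := by
  rw [← hconj, mulVec_mulVec, Matrix.mul_assoc, mul_nonsing_inv T hT, Matrix.mul_one,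
    ← mulVec_mulVec, hv, mulVec_smul]

theorem vecMul_eigenvector_of_conj (hT : IsUnit T.det) (hconj : T⁻¹ * M * T = J)
    {w : n → K} (hw : w ᵥ* M = γ • w) : (w ᵥ* T) ᵥ* J = γ • (w ᵥ* T) := by
  rw [← hconj, vecMul_vecMul, ← Matrix.mul_assoc, ← Matrix.mul_assoc, mul_nonsing_inv T hT,
    Matrix.one_mul, ← vecMul_vecMul, hw, smul_vecMul]

theorem vecMulVec_eq_conj (hT : IsUnit T.det) (v w : n → K) :
    vecMulVec v w = T * vecMulVec (T⁻¹ *ᵥ v) (w ᵥ* T) * T⁻¹ := by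
  rw [mul_vecMulVec, vecMulVec_mul, mulVec_mulVec, mul_nonsing_inv T hT, one_mulVec,
    vecMul_vecMul, mul_nonsing_inv T hT, vecMul_one]

theorem dotProduct_vecMul_mulVec_inv (hT : IsUnit T.det) (v w : n → K) :
    (w ᵥ* T) ⬝ᵥ (T⁻¹ *ᵥ v) = w ⬝ᵥ v := by
  rw [← dotProduct_mulVec, mulVec_mulVec, mul_nonsing_inv T hT, one_mulVec]

end Conjugation

theorem vecMulVec_single_single {m n α : Type*} [DecidableEq m] [DecidableEq n]
    [MulZeroClass α] (i : m) (j : n) (a b : α) :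
    vecMulVec (Pi.single i a) (Pi.single j b) = single i j (a * b) := by
  ext k l
  simp only [vecMulVec_apply, single_apply, Pi.single_apply]
  split_ifs <;> simp_all

end Matrix

section RealJordan

variable {K : Type*} [CommRing K]

def realJordan (β γ : K) : Matrix (Fin 3) (Fin 3) K :=
  !![0, β, 0; -β, 0, 0; 0, 0, γ]

theorem realJordan_transpose (β γ : K) : (realJordan β γ)ᵀ = realJordan (-β) γ := by
  ext i j
  fin_cases i <;> fin_cases j <;> simp [realJordan]

variable [LinearOrder K] [IsStrictOrderedRing K]

theorem eq_single_of_realJordan_mulVec {β γ : K} (hβ : β ≠ 0) {x : Fin 3 → K}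
    (hx : realJordan β γ *ᵥ x = γ • x) : x = Pi.single 2 (x 2) := by
  have h0 : β * x 1 = γ * x 0 := by
    simpa [realJordan, mulVec, dotProduct, Fin.sum_univ_three] using congrFun hx 0
  have h1 : -β * x 0 = γ * x 1 := by
    simpa [realJordan, mulVec, dotProduct, Fin.sum_univ_three] using congrFun hx 1
  have hsq : β * (x 0 ^ 2 + x 1 ^ 2) = 0 := by linear_combination x 1 * h0 - x 0 * h1
  have hsq' : x 0 ^ 2 + x 1 ^ 2 = 0 := (mul_eq_zero.mp hsq).resolve_left hβ
  obtain ⟨hx0, hx1⟩ := (add_eq_zero_iff_of_nonneg (sq_nonneg _) (sq_nonneg _)).mp hsq'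
  rw [sq_eq_zero_iff] at hx0 hx1
  ext i
  fin_cases i <;> simp [hx0, hx1]

theorem eq_single_of_vecMul_realJordan {β γ : K} (hβ : β ≠ 0) {x : Fin 3 → K}
    (hx : x ᵥ* realJordan β γ = γ • x) : x = Pi.single 2 (x 2) := by
  rw [← neg_neg β, ← realJordan_transpose, vecMul_transpose] at hx
  exact eq_single_of_realJordan_mulVec (neg_ne_zero.mpr hβ) hx

end RealJordan

/-- If `T` conjugates `M` into the real Jordan form `J(β,γ)` and `w`, `v` are left and
right eigenvectors of `M` for the eigenvalue `γ` normalised by `wᵀv = 1`, then the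
outer product `v wᵀ` equals `T E₃₃ T⁻¹`. -/
theorem stmt_3 (β γ : ℝ) (hβ : β ≠ 0) (M T : Matrix (Fin 3) (Fin 3) ℝ)
    (hT : IsUnit T.det)
    (hconj : T⁻¹ * M * T = !![0, β, 0; -β, 0, 0; 0, 0, γ])
    (w v : Fin 3 → ℝ)
    (hw : Matrix.vecMul w M = γ • w)
    (hv : M.mulVec v = γ • v)
    (hwv : ∑ i, w i * v i = 1) :
    Matrix.vecMulVec v w = T * Matrix.single 2 2 (1 : ℝ) * T⁻¹ := by
  have hv' := eq_single_of_realJordan_mulVec hβ (mulVec_inv_eigenvector_of_conj hT hconj hv)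
  have hw' := eq_single_of_vecMul_realJordan hβ (vecMul_eigenvector_of_conj hT hconj hw)
  have hnorm : (w ᵥ* T) 2 * (T⁻¹ *ᵥ v) 2 = 1 := by
    rw [← hwv, ← dotProduct, ← dotProduct_vecMul_mulVec_inv hT v w, hv', hw', single_dotProduct,
      Pi.single_eq_same]
  rw [vecMulVec_eq_conj hT, hv', hw', vecMulVec_single_single, mul_comm, hnorm]
end

section
/- Let a, b, c, γ, β, ψ ∈ ℝ with a ≠ 0, β > 0, ψ > 0, and set E = e^{2πγ/β}. For (ε₁, ε₃) ∈ ℝ² define Y(ε₁,ε₃) = (−aψ/(a²+b²) + ε₁, −bψ/(a²+b²) + (b/a)ε₁ − (cγ/(aβ))ε₃, ε₃) ∈ ℝ³, let φ_t(Y) = (cos(βt) Y₁ + sin(βt) Y₂, −sin(βt) Y₁ + cos(βt) Y₂, e^{γt} Y₃), and let C(ε₁,ε₃,t) = −bβ (φ_t(Y(ε₁,ε₃)))₁ + aβ (φ_t(Y(ε₁,ε₃)))₂ + cγ (φ_t(Y(ε₁,ε₃)))₃. Then there exist an open neighbourhood U of (0,0) in ℝ² and a C¹ function T : U → ℝ such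 that: T(0,0) = 2π/β; C(ε₁,ε₃,T(ε₁,ε₃)) = 0 for all (ε₁,ε₃) ∈ U; the gradient of T at (0,0) equals (0, cγ(1−E)/(β²ψ)); and the map R(ε₁,ε₃) = ((φ_{T(ε₁,ε₃)}(Y(ε₁,ε₃)))₁ + aψ/(a²+b²), (φ_{T(ε₁,ε₃)}(Y(ε₁,ε₃)))₃) is differentiable at (0,0) with Jacobian matrix having rows (1, −bcγ(1−E)/((a²+b²)β)) and (0, E). -/
/-!
On the section `Ω₀` the Lie derivative along the flow collapses to
`C(ε, t) = sin (βt) · (βψ + O(ε)) + cγ (e^{γt} - cos (βt)) ε₃`, so `C` vanishes at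
`(0, 0, 2π/β)` with `∂C/∂t = β²ψ ≠ 0` and `∂C/∂ε = (0, cγ(E - 1))` there. The implicit function
theorem then yields the return time `T` and its gradient `-(β²ψ)⁻¹ ∂C/∂ε`. Since `φ_{2π/β}` is
`diag(1, 1, E)` and `∂φ_t/∂t` at the grazing point `G` is `(βG₂, -βG₁, 0)`, the chain rule gives
the Jacobian of the return map.
-/

open Real Topology

section ImplicitFunction

variable {𝕜 : Type*} [RCLike 𝕜] {E : Type*} [NormedAddCommGroup E] [NormedSpace 𝕜 E]
  [CompleteSpace E]

theorem ContDiffAt.exists_isOpen_contDiffOn_implicit {f : E × 𝕜 → 𝕜} {u : E × 𝕜} {n : ℕ}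
    (hf : ContDiffAt 𝕜 n f u) (hn : n ≠ 0) {L : E →L[𝕜] 𝕜} {m : 𝕜} (hm : m ≠ 0)
    (hf' : HasFDerivAt f (L.coprod (m • 1)) u) :
    ∃ U : Set E, IsOpen U ∧ u.1 ∈ U ∧ ∃ T : E → 𝕜, ContDiffOn 𝕜 n T U ∧ T u.1 = u.2 ∧
      (∀ x ∈ U, f (x, T x) = f u) ∧ HasFDerivAt T (-m⁻¹ • L) u.1 := by
  have hn' : (n : WithTop ℕ∞) ≠ 0 := by exact_mod_cast hn
  have hmul : (m • 1 : 𝕜 →L[𝕜] 𝕜) = ContinuousLinearEquiv.unitsEquivAut 𝕜 (.mk0 m hm) := by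
    ext; simp [mul_comm]
  have hinv : (fderiv 𝕜 f u ∘L .inr 𝕜 E 𝕜).IsInvertible := by
    rw [hf'.fderiv, ContinuousLinearMap.coprod_comp_inr, hmul]
    exact ⟨_, rfl⟩
  set T := hf.implicitFunction hn' hinv
  have hsolves : ∀ᶠ x in 𝓝 u.1, ContDiffAt 𝕜 n T x ∧ f (x, T x) = f u :=
    ((hf.contDiffAt_implicitFunction hn' hinv).eventually (by simp)).and
      (hf.eventually_apply_implicitFunction hn' hinv)
  obtain ⟨U, hUsub, hUo, hu⟩ := mem_nhds_iff.mp hsolves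
  refine ⟨U, hUo, hu, T, fun x hx => (hUsub hx).1.contDiffWithinAt,
    hf.implicitFunction_apply_self hn' hinv, fun x hx => (hUsub hx).2, ?_⟩
  have hT := (hf.hasStrictFDerivAt_implicitFunction hn' hinv).hasFDerivAt
  rw [hf'.fderiv, ContinuousLinearMap.coprod_comp_inr, ContinuousLinearMap.coprod_comp_inl, hmul,
    ContinuousLinearMap.inverse_equiv] at hT
  refine hT.congr_fderiv ?_
  ext
  simp [mul_comm]

end ImplicitFunction

theorem HasFDerivAt.cos_mul_add_sin_mul_of_mul_eq_two_pi {E : Type*} [NormedAddCommGroup E]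
    [NormedSpace ℝ E] {T x y : E → ℝ} {T' x' y' : E →L[ℝ] ℝ} {e : E} {β : ℝ}
    (hT : HasFDerivAt T T' e) (hx : HasFDerivAt x x' e) (hy : HasFDerivAt y y' e)
    (hβT : β * T e = 2 * π) :
    HasFDerivAt (fun e => Real.cos (β * T e) * x e + Real.sin (β * T e) * y e)
      (x' + (β * y e) • T') e := by
  have h := (((hT.const_mul β).cos).mul hx).add (((hT.const_mul β).sin).mul hy)
  simp only [hβT, cos_two_pi, sin_two_pi] at h
  refine h.congr_fderiv ?_
  ext
  simp only [add_apply, smul_apply, smul_eq_mul]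
  ring

noncomputable section

namespace BoundaryHopf

def flow (β γ t : ℝ) (Z : Fin 3 → ℝ) : Fin 3 → ℝ :=
  ![cos (β * t) * Z 0 + sin (β * t) * Z 1, -sin (β * t) * Z 0 + cos (β * t) * Z 1,
    exp (γ * t) * Z 2]

variable (a b c γ β ψ : ℝ)

def sectionPoint (ε : ℝ × ℝ) : Fin 3 → ℝ :=
  ![-a * ψ / (a ^ 2 + b ^ 2) + ε.1,
    -b * ψ / (a ^ 2 + b ^ 2) + (b / a) * ε.1 - (c * γ / (a * β)) * ε.2, ε.2]

def crossing (p : (ℝ × ℝ) × ℝ) : ℝ :=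
  sin (β * p.2) * (β * ψ - β * (a ^ 2 + b ^ 2) / a * p.1.1 + b * c * γ / a * p.1.2)
    + c * γ * (exp (γ * p.2) - cos (β * p.2)) * p.1.2

variable {a β} in
theorem lieDerivative_flow_sectionPoint (ha : a ≠ 0) (hβ : β ≠ 0) (ε : ℝ × ℝ) (t : ℝ) :
    -b * β * flow β γ t (sectionPoint a b c γ β ψ ε) 0
      + a * β * flow β γ t (sectionPoint a b c γ β ψ ε) 1
      + c * γ * flow β γ t (sectionPoint a b c γ β ψ ε) 2 = crossing a b c γ β ψ (ε, t) := by
  have hab : a ^ 2 + b ^ 2 ≠ 0 := by positivity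
  simp only [flow, sectionPoint, crossing, Matrix.cons_val_zero, Matrix.cons_val_one,
    Matrix.cons_val_two, Matrix.head_cons, Matrix.tail_cons]
  field_simp
  ring

theorem contDiff_crossing {n : WithTop ℕ∞} : ContDiff ℝ n (crossing a b c γ β ψ) := by
  unfold crossing
  fun_prop

theorem hasFDerivAt_crossing {t : ℝ} (hβt : β * t = 2 * π) :
    HasFDerivAt (crossing a b c γ β ψ)
      (((c * γ * (exp (γ * t) - 1)) • ContinuousLinearMap.snd ℝ ℝ ℝ).coprod
        ((β ^ 2 * ψ) • 1)) ((0, 0), t) := by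
  have ht := hasFDerivAt_snd (𝕜 := ℝ) (p := (((0, 0) : ℝ × ℝ), t))
  have hε := hasFDerivAt_fst (𝕜 := ℝ) (p := (((0, 0) : ℝ × ℝ), t))
  have hε₁ := hasFDerivAt_fst.comp _ hε
  have hε₂ := hasFDerivAt_snd.comp _ hε
  have h := ((ht.const_mul β).sin.mul
      (((hε₁.const_mul (β * (a ^ 2 + b ^ 2) / a)).const_sub (β * ψ)).add
        (hε₂.const_mul (b * c * γ / a)))).add
    ((((ht.const_mul γ).exp.sub (ht.const_mul β).cos).const_mul (c * γ)).mul hε₂)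
  refine h.congr_fderiv (ContinuousLinearMap.ext fun p => ?_)
  simp [hβt]
  ring

variable {a b c γ β ψ} in
theorem hasFDerivAt_returnMap {T : ℝ × ℝ → ℝ} {T' : ℝ × ℝ →L[ℝ] ℝ}
    (hT : HasFDerivAt T T' (0, 0)) (hβT : β * T (0, 0) = 2 * π) :
    HasFDerivAt
      (fun ε => (flow β γ (T ε) (sectionPoint a b c γ β ψ ε) 0 + a * ψ / (a ^ 2 + b ^ 2),
        flow β γ (T ε) (sectionPoint a b c γ β ψ ε) 2))
      ((ContinuousLinearMap.fst ℝ ℝ ℝ + (-β * b * ψ / (a ^ 2 + b ^ 2)) • T').prod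
        (exp (γ * T (0, 0)) • ContinuousLinearMap.snd ℝ ℝ ℝ)) (0, 0) := by
  have h₀ : HasFDerivAt (fun ε => sectionPoint a b c γ β ψ ε 0) (ContinuousLinearMap.fst ℝ ℝ ℝ)
      (0, 0) :=
    hasFDerivAt_fst.const_add _
  have h₁ : HasFDerivAt (fun ε => sectionPoint a b c γ β ψ ε 1)
      ((b / a) • ContinuousLinearMap.fst ℝ ℝ ℝ -
        (c * γ / (a * β)) • ContinuousLinearMap.snd ℝ ℝ ℝ) (0, 0) :=
    ((hasFDerivAt_fst.const_mul _).const_add _).sub (hasFDerivAt_snd.const_mul _)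
  have h₂ : HasFDerivAt (fun ε => sectionPoint a b c γ β ψ ε 2) (ContinuousLinearMap.snd ℝ ℝ ℝ)
      (0, 0) :=
    hasFDerivAt_snd
  refine HasFDerivAt.prodMk ?_ ?_
  · refine ((hT.cos_mul_add_sin_mul_of_mul_eq_two_pi h₀ h₁ hβT).add_const _).congr_fderiv ?_
    refine ContinuousLinearMap.ext fun v => ?_
    simp only [sectionPoint, Matrix.cons_val_zero, Matrix.cons_val_one, add_apply,
      ContinuousLinearMap.coe_fst', smul_apply, smul_eq_mul]
    ring
  · refine ((hT.const_mul γ).exp.mul h₂).congr_fderiv (ContinuousLinearMap.ext fun v => ?_)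
    simp [sectionPoint]

end BoundaryHopf

end

open BoundaryHopf

/-- The derivative of the global return map of the blown-up Filippov system at a
boundary Hopf bifurcation: there is a `C¹` return time `T` to the cross-section,
with the stated value, gradient, and the stated Jacobian of the return map. -/
theorem stmt_6 (a b c γ β ψ : ℝ) (ha : a ≠ 0) (hβ : 0 < β) (hψ : 0 < ψ)
    (E : ℝ) (hE : E = Real.exp (2 * Real.pi * γ / β))
    (Y : ℝ × ℝ → Fin 3 → ℝ)
    (hY : Y = fun ε => ![-a * ψ / (a ^ 2 + b ^ 2) + ε.1,
        -b * ψ / (a ^ 2 + b ^ 2) + (b / a) * ε.1 - (c * γ / (a * β)) * ε.2,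
        ε.2])
    (φ : ℝ → (Fin 3 → ℝ) → Fin 3 → ℝ)
    (hφ : φ = fun t Z => ![Real.cos (β * t) * Z 0 + Real.sin (β * t) * Z 1,
        -Real.sin (β * t) * Z 0 + Real.cos (β * t) * Z 1,
        Real.exp (γ * t) * Z 2])
    (C : ℝ × ℝ → ℝ → ℝ)
    (hC : C = fun ε t =>
      -b * β * φ t (Y ε) 0 + a * β * φ t (Y ε) 1 + c * γ * φ t (Y ε) 2) :
    ∃ U : Set (ℝ × ℝ), IsOpen U ∧ (0, 0) ∈ U ∧
      ∃ T : ℝ × ℝ → ℝ, ContDiffOn ℝ 1 T U ∧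
        T (0, 0) = 2 * Real.pi / β ∧
        (∀ ε ∈ U, C ε (T ε) = 0) ∧
        HasFDerivAt T
          ((c * γ * (1 - E) / (β ^ 2 * ψ)) • ContinuousLinearMap.snd ℝ ℝ ℝ) (0, 0) ∧
        HasFDerivAt
          (fun ε : ℝ × ℝ =>
            (φ (T ε) (Y ε) 0 + a * ψ / (a ^ 2 + b ^ 2), φ (T ε) (Y ε) 2))
          ((ContinuousLinearMap.fst ℝ ℝ ℝ +
              (-b * c * γ * (1 - E) / ((a ^ 2 + b ^ 2) * β)) •
                ContinuousLinearMap.snd ℝ ℝ ℝ).prod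
            (E • ContinuousLinearMap.snd ℝ ℝ ℝ)) (0, 0) := by
  obtain rfl : Y = sectionPoint a b c γ β ψ := hY
  obtain rfl : φ = flow β γ := hφ
  subst hC
  have hβt : β * (2 * π / β) = 2 * π := by field_simp
  have hγt : exp (γ * (2 * π / β)) = E := by rw [hE]; ring_nf
  have hcrossing : crossing a b c γ β ψ ((0, 0), 2 * π / β) = 0 := by simp [crossing, hβt]
  obtain ⟨U, hUo, hU0, T, hT, hT0, hCT, hT'⟩ :=
    (contDiff_crossing a b c γ β ψ).contDiffAt.exists_isOpen_contDiffOn_implicit one_ne_zero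
      (by positivity) (hasFDerivAt_crossing a b c γ β ψ hβt)
  replace hT0 : T (0, 0) = 2 * π / β := hT0
  rw [hγt] at hT'
  have hTderiv : HasFDerivAt T
      ((c * γ * (1 - E) / (β ^ 2 * ψ)) • ContinuousLinearMap.snd ℝ ℝ ℝ) (0, 0) :=
    hT'.congr_fderiv (ContinuousLinearMap.ext fun v => by simp; field_simp; ring)
  refine ⟨U, hUo, hU0, T, hT, hT0, fun ε hε => ?_, hTderiv, ?_⟩
  · beta_reduce
    rw [lieDerivative_flow_sectionPoint b c γ ψ ha hβ.ne', hCT ε hε, hcrossing]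
  · refine (hasFDerivAt_returnMap hTderiv (by rw [hT0, hβt])).congr_fderiv ?_
    rw [hT0, hγt]
    refine ContinuousLinearMap.ext fun v => ?_
    simp
    field_simp
end

section
/- Let a, b, c, p, q, r, β, γ ∈ ℝ with a ≠ 0, β ≠ 0, and S := ap + bq + cr ≠ 0, and set E = e^{2πγ/β}. Let A be the 2×2 matrix with rows (1, −bcγ(1−E)/((a²+b²)β)) and (0, E), and let B be the 2×2 matrix with rows ((aβ−bγ)cr/(aβS), −((aβ−bγ)c/(β(a²+b²)S))(ap + bq + bcrγ/(aβ))) and (−(a²+b²)r/(aS), 1 − (aβ−bγ)cr/(aβS)). Then trace(A·B) = (cr/S)(1 − E) + E. -/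
/-- The trace of the product of the derivative of the global return map and the
derivative of the discontinuity map gives the limiting value of `τ_L`. -/
theorem stmt_9 (a b c p q r β γ : ℝ) (ha : a ≠ 0) (hβ : β ≠ 0)
    (hS : a * p + b * q + c * r ≠ 0)
    (E : ℝ) (hE : E = Real.exp (2 * Real.pi * γ / β))
    (A B : Matrix (Fin 2) (Fin 2) ℝ)
    (hA : A = !![1, -b * c * γ * (1 - E) / ((a ^ 2 + b ^ 2) * β); 0, E])
    (hB : B = !![(a * β - b * γ) * c * r / (a * β * (a * p + b * q + c * r)),
         -((a * β - b * γ) * c / (β * (a ^ 2 + b ^ 2) * (a * p + b * q + c * r))) *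
           (a * p + b * q + b * c * r * γ / (a * β));
         -(a ^ 2 + b ^ 2) * r / (a * (a * p + b * q + c * r)),
         1 - (a * β - b * γ) * c * r / (a * β * (a * p + b * q + c * r))]) :
    Matrix.trace (A * B) = (c * r / (a * p + b * q + c * r)) * (1 - E) + E := by
  have hab : a ^ 2 + b ^ 2 ≠ 0 := by positivity
  subst hA hB
  rw [Matrix.trace_fin_two]
  simp [Matrix.mul_apply, Fin.sum_univ_two]
  field_simp
  ring
end

section
/- Let τ_L, τ_R ∈ ℝ with τ_L < −1 and 0 < τ_R < 2/(1 − τ_L), and let g be the reduced border-collision normal form with parameters τ_L, τ_R. Let W_L = (2/(τ_L − 1), −(τ_L + 1)(τ_R − 1)/(τ_R(τ_L − 1))) and W_R = ((τ_L + 1)/(τ_R(τ_L − 1)), 0). Then the first coordinate of W_L is negative, the first coordinate of W_R is positive, g(W_L) = W_R and g(W_R) = W_L (so {W_L, W_R} is a period-two orbit of g), and there exists an open neighbourhood U of W_L in ℝ² such that for every z ∈ U the iterates (g∘g)ⁿ(z) converge to W_L as n → ∞. -/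
/-- For `τ_L < -1` and `0 < τ_R < 2/(1 - τ_L)`, the reduced border-collision normal
form has a stable period-two orbit `{W_L, W_R}` with `W_L` in the left half-plane and
`W_R` in the right half-plane. -/
theorem stmt_13 (τL τR : ℝ) (h1 : τL < -1) (h2 : 0 < τR) (h3 : τR < 2 / (1 - τL))
    (g : ℝ × ℝ → ℝ × ℝ)
    (hg : g = fun p => if p.1 ≤ 0 then (τL * p.1 + p.2 - 1, 0)
        else (τR * p.1 + p.2 - 1, (1 - τR) * p.1))
    (WL WR : ℝ × ℝ)
    (hWL : WL = (2 / (τL - 1), -((τL + 1) * (τR - 1)) / (τR * (τL - 1))))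
    (hWR : WR = ((τL + 1) / (τR * (τL - 1)), 0)) :
    WL.1 < 0 ∧ 0 < WR.1 ∧ g WL = WR ∧ g WR = WL ∧
    ∃ U : Set (ℝ × ℝ), IsOpen U ∧ WL ∈ U ∧
      ∀ z ∈ U, Filter.Tendsto (fun k => (g ∘ g)^[k] z) Filter.atTop (nhds WL) := by
  subst hWL hWR
  have hτL1 : τL - 1 < 0 := by linarith
  have hτLne : τL - 1 ≠ 0 := ne_of_lt hτL1
  have hτRne : τR ≠ 0 := ne_of_gt h2
  have h1τL : (0:ℝ) < 1 - τL := by linarith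
  have hprod : τR * (1 - τL) < 2 := (lt_div_iff₀ h1τL).mp h3
  have hprod0 : 0 < τR * (1 - τL) := mul_pos h2 h1τL
  set a : ℝ := 2 / (τL - 1) with ha_def
  set c : ℝ := -((τL + 1) * (τR - 1)) / (τR * (τL - 1)) with hc_def
  set b : ℝ := (τL + 1) / (τR * (τL - 1)) with hb_def
  set l : ℝ := τL * τR + 1 - τR with hl_def
  have ha : a < 0 := div_neg_of_pos_of_neg two_pos hτL1
  have hb : 0 < b := div_pos_of_neg_of_neg (by linarith) (mul_neg_of_pos_of_neg h2 hτL1)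
  have hl : |l| < 1 := by
    rw [abs_lt]
    constructor <;> nlinarith
  have hlk : ∀ k : ℕ, |l ^ k| ≤ 1 := by
    intro k
    rw [abs_pow]
    exact pow_le_one₀ (abs_nonneg _) hl.le
  have E1 : τL * a + c - 1 = b := by
    rw [ha_def, hc_def, hb_def]; field_simp; ring
  have E2 : τR * b - 1 = a := by
    rw [ha_def, hb_def]; field_simp; ring
  have E3 : (1 - τR) * b = c := by
    rw [hc_def, hb_def]; field_simp; ring
  -- the one-step computation for g ∘ g on the relevant region
  have step : ∀ p : ℝ × ℝ, p.1 ≤ 0 → 0 ≤ τL * p.1 + p.2 - 1 →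
      (g ∘ g) p = (τR * (τL * p.1 + p.2 - 1) - 1, (1 - τR) * (τL * p.1 + p.2 - 1)) := by
    intro p hp hmid
    simp only [Function.comp_apply, hg, if_pos hp]
    by_cases hw : τL * p.1 + p.2 - 1 ≤ 0
    · have h0 : τL * p.1 + p.2 - 1 = 0 := le_antisymm hw hmid
      simp only [h0, if_pos le_rfl]
      norm_num
    · rw [if_neg hw]
      norm_num
  refine ⟨ha, hb, ?_, ?_, ?_⟩
  · -- g WL = WR
    simp only [hg]
    rw [if_pos (show ((a:ℝ), c).1 ≤ 0 from ha.le)]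
    exact Prod.ext E1 rfl
  · -- g WR = WL
    simp only [hg]
    rw [if_neg (show ¬((b:ℝ), (0:ℝ)).1 ≤ 0 from not_le.mpr hb)]
    refine Prod.ext ?_ E3
    simpa using E2
  · -- stability
    refine ⟨{z : ℝ × ℝ | |z.1 - a| < -a ∧ |τR * (τL * (z.1 - a) + (z.2 - c))| < -a ∧
        |τL * (z.1 - a) + (z.2 - c)| < b}, ?_, ?_, ?_⟩
    · have o1 : IsOpen {z : ℝ × ℝ | |z.1 - a| < -a} :=
        isOpen_lt (by fun_prop) continuous_const
      have o2 : IsOpen {z : ℝ × ℝ | |τR * (τL * (z.1 - a) + (z.2 - c))| < -a} :=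
        isOpen_lt (by fun_prop) continuous_const
      have o3 : IsOpen {z : ℝ × ℝ | |τL * (z.1 - a) + (z.2 - c)| < b} :=
        isOpen_lt (by fun_prop) continuous_const
      exact o1.inter (o2.inter o3)
    · refine ⟨?_, ?_, ?_⟩ <;> · simp; linarith
    · rintro z ⟨hz1, hz2, hz3⟩
      set s : ℝ := τL * (z.1 - a) + (z.2 - c) with hs_def
      -- bounds on iterated terms
      have habs1 : ∀ k : ℕ, |τR * (l ^ k * s)| < -a := by
        intro k
        calc |τR * (l ^ k * s)| = |l ^ k| * |τR * s| := by
              rw [show τR * (l ^ k * s) = l ^ k * (τR * s) by ring, abs_mul]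
          _ ≤ 1 * |τR * s| := mul_le_mul_of_nonneg_right (hlk k) (abs_nonneg _)
          _ = |τR * s| := one_mul _
          _ < -a := hz2
      have habs2 : ∀ k : ℕ, |l ^ k * s| < b := by
        intro k
        calc |l ^ k * s| = |l ^ k| * |s| := abs_mul _ _
          _ ≤ 1 * |s| := mul_le_mul_of_nonneg_right (hlk k) (abs_nonneg _)
          _ = |s| := one_mul _
          _ < b := hz3
      -- closed form for the iterates
      have key : ∀ k : ℕ, (g ∘ g)^[k + 1] z =
          (a + τR * (l ^ k * s), c + (1 - τR) * (l ^ k * s)) := by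
        intro k
        induction k with
        | zero =>
          have hz1' : z.1 ≤ 0 := by
            have := le_abs_self (z.1 - a)
            linarith
          have hmid : τL * z.1 + z.2 - 1 = b + s := by
            rw [hs_def]; linarith [E1, (by ring :
              τL * z.1 + z.2 - 1 = (τL * a + c - 1) + (τL * (z.1 - a) + (z.2 - c)))]
          have hmid0 : 0 ≤ τL * z.1 + z.2 - 1 := by
            rw [hmid]
            have := neg_abs_le s
            have hsb : |s| < b := hz3
            linarith
          rw [Function.iterate_one, step z hz1' hmid0, hmid]
          rw [Prod.mk.injEq]
          constructor
          · simp only [pow_zero, one_mul]; linear_combination E2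
          · simp only [pow_zero, one_mul]; linear_combination E3
        | succ k ih =>
          rw [Function.iterate_succ_apply', ih]
          set t : ℝ := l ^ k * s with ht_def
          have hp1 : a + τR * t ≤ 0 := by
            have := le_abs_self (τR * t)
            have := habs1 k
            linarith
          have hmid : τL * (a + τR * t) + (c + (1 - τR) * t) - 1 = b + l * t := by
            have : τL * (a + τR * t) + (c + (1 - τR) * t) - 1
                = (τL * a + c - 1) + (τL * τR + 1 - τR) * t := by ring
            rw [this, E1, hl_def]
          have hmid0 : 0 ≤ τL * (a + τR * t) + (c + (1 - τR) * t) - 1 := by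
            rw [hmid]
            have h4 := habs2 (k + 1)
            have : l * t = l ^ (k + 1) * s := by rw [ht_def]; ring
            rw [this]
            have := neg_abs_le (l ^ (k + 1) * s)
            linarith
          have hstep := step (a + τR * t, c + (1 - τR) * t) hp1 hmid0
          dsimp only at hstep
          rw [hstep, hmid]
          have hlt : l * t = l ^ (k + 1) * s := by rw [ht_def]; ring
          rw [hlt, Prod.mk.injEq]
          constructor
          · linear_combination E2
          · linear_combination E3
      -- convergence
      have hl0 : Filter.Tendsto (fun k : ℕ => l ^ k) Filter.atTop (nhds 0) :=
        tendsto_pow_atTop_nhds_zero_of_abs_lt_one hl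
      have t1 : Filter.Tendsto (fun k : ℕ => a + τR * (l ^ k * s)) Filter.atTop (nhds a) := by
        have : Filter.Tendsto (fun k : ℕ => τR * (l ^ k * s)) Filter.atTop (nhds 0) := by
          have := hl0.const_mul (τR * s)
          simpa [mul_comm, mul_assoc, mul_left_comm] using this
        simpa using this.const_add a
      have t2 : Filter.Tendsto (fun k : ℕ => c + (1 - τR) * (l ^ k * s)) Filter.atTop (nhds c) := by
        have : Filter.Tendsto (fun k : ℕ => (1 - τR) * (l ^ k * s)) Filter.atTop (nhds 0) := by
          have := hl0.const_mul ((1 - τR) * s)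
          simpa [mul_comm, mul_assoc, mul_left_comm] using this
        simpa using this.const_add c
      have tpair : Filter.Tendsto
          (fun k : ℕ => ((a + τR * (l ^ k * s), c + (1 - τR) * (l ^ k * s)) : ℝ × ℝ))
          Filter.atTop (nhds (a, c)) :=
        t1.prodMk_nhds t2
      have tshift : Filter.Tendsto (fun k : ℕ => (g ∘ g)^[k + 1] z) Filter.atTop
          (nhds (a, c)) := by
        refine tpair.congr ?_
        intro k
        exact (key k).symm
      exact (Filter.tendsto_add_atTop_iff_nat 1).mp tshift
end
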